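/- There exists a constant C > 0 such that for every continuously differentiable function f : ℝ³ → ℝ with compact support, ‖f‖_{L⁴(ℝ³)} ≤ C · ‖f‖_{L²(ℝ³)}^{1/4} · ‖∇f‖_{L²(ℝ³)}^{3/4}, where ∇f denotes the (Fréchet) derivative of f and ‖∇f‖_{L²(ℝ³)} is the L² norm (with respect to Lebesgue measure on ℝ³) of the pointwise operator norm of ∇f. -/

import Mathlib

/-!
Writing `‖f‖ = ‖f‖^θ ‖f‖^(1-θ)` and applying Hölder's inequality interpolates the L⁴ norm
between the L² and L⁶ norms: `‖f‖₄ ≤ ‖f‖₂^(1/4) ‖f‖₆^(3/4)`. In three dimensions the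
Gagliardo–Nirenberg–Sobolev inequality bounds `‖f‖₆` by a multiple of `‖∇f‖₂`,
because `1/6 = 1/2 - 1/3`.
-/

open MeasureTheory ENNReal Module

theorem eLpNorm_le_eLpNorm_rpow_mul_eLpNorm_rpow {α E : Type*} [MeasurableSpace α]
    {μ : Measure α} [NormedAddCommGroup E] {f : α → E} {p q r : ℝ≥0∞} {θ : ℝ}
    (hf : AEStronglyMeasurable f μ) (hθ₀ : 0 < θ) (hθ₁ : θ < 1)
    (hpqr : ENNReal.ofReal θ * p⁻¹ + ENNReal.ofReal (1 - θ) * q⁻¹ = r⁻¹) :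
    eLpNorm f r μ ≤ eLpNorm f p μ ^ θ * eLpNorm f q μ ^ (1 - θ) := by
  have hθ : ENNReal.ofReal θ ≠ 0 := by simpa using hθ₀
  have hθ' : ENNReal.ofReal (1 - θ) ≠ 0 := by simpa using hθ₁
  have : HolderTriple (p / ENNReal.ofReal θ) (q / ENNReal.ofReal (1 - θ)) r :=
    ⟨by rwa [ENNReal.inv_div (by simp) (Or.inl hθ), ENNReal.inv_div (by simp) (Or.inl hθ'),
      ENNReal.div_eq_inv_mul, ENNReal.div_eq_inv_mul, mul_comm p⁻¹, mul_comm q⁻¹]⟩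
  calc eLpNorm f r μ = eLpNorm (fun x ↦ ‖f x‖ ^ θ * ‖f x‖ ^ (1 - θ)) r μ := by
        rw [← eLpNorm_norm f]
        congr with x
        rw [← Real.rpow_add' (norm_nonneg _) (by simp), add_sub_cancel, Real.rpow_one]
    _ ≤ 1 * eLpNorm (fun x ↦ ‖f x‖ ^ θ) (p / ENNReal.ofReal θ) μ *
          eLpNorm (fun x ↦ ‖f x‖ ^ (1 - θ)) (q / ENNReal.ofReal (1 - θ)) μ :=
        eLpNorm_le_eLpNorm_mul_eLpNorm'_of_norm (by fun_prop (disch := linarith))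
          (by fun_prop (disch := linarith))
          (· * ·) 1 (.of_forall fun x ↦ by simp [norm_mul])
    _ = eLpNorm f p μ ^ θ * eLpNorm f q μ ^ (1 - θ) := by
        rw [eLpNorm_norm_rpow _ hθ₀, eLpNorm_norm_rpow _ (sub_pos.2 hθ₁),
          ENNReal.div_mul_cancel hθ (by simp), ENNReal.div_mul_cancel hθ' (by simp), one_mul]

theorem eLpNorm_four_le_of_finrank_eq_three {E F : Type*} [NormedAddCommGroup E]
    [NormedSpace ℝ E] [MeasurableSpace E] [BorelSpace E] [FiniteDimensional ℝ E]
    (μ : Measure E) [μ.IsAddHaarMeasure] [NormedAddCommGroup F] [NormedSpace ℝ F]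
    [FiniteDimensional ℝ F] (hE : finrank ℝ E = 3) {u : E → F} (hu : ContDiff ℝ 1 u)
    (h2u : HasCompactSupport u) :
    eLpNorm u 4 μ ≤ SNormLESNormFDerivOfEqConst F μ 2 ^ (3 / 4 : ℝ) *
      eLpNorm u 2 μ ^ (1 / 4 : ℝ) * eLpNorm (fderiv ℝ u) 2 μ ^ (3 / 4 : ℝ) := by
  have sobolev :
      eLpNorm u 6 μ ≤ SNormLESNormFDerivOfEqConst F μ 2 * eLpNorm (fderiv ℝ u) 2 μ :=
    eLpNorm_le_eLpNorm_fderiv_of_eq μ hu h2u (p := 2) (p' := 6) (by norm_num) (by omega)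
      (by rw [hE]; norm_num)
  have exponents : ENNReal.ofReal (1 / 4) * 2⁻¹ + ENNReal.ofReal (1 - 1 / 4) * 6⁻¹ =
      (4 : ℝ≥0∞)⁻¹ := by
    rw [← ENNReal.toReal_eq_toReal_iff' (by finiteness) (by finiteness),
      ENNReal.toReal_add (by finiteness) (by finiteness)]
    simp only [ENNReal.toReal_mul, ENNReal.toReal_inv, ENNReal.toReal_ofNat,
      ENNReal.toReal_ofReal (by norm_num : (0 : ℝ) ≤ 1 / 4),
      ENNReal.toReal_ofReal (by norm_num : (0 : ℝ) ≤ 1 - 1 / 4)]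
    norm_num
  calc eLpNorm u 4 μ ≤ eLpNorm u 2 μ ^ (1 / 4 : ℝ) * eLpNorm u 6 μ ^ (1 - 1 / 4 : ℝ) :=
        eLpNorm_le_eLpNorm_rpow_mul_eLpNorm_rpow hu.continuous.aestronglyMeasurable
          (by norm_num) (by norm_num) exponents
    _ ≤ eLpNorm u 2 μ ^ (1 / 4 : ℝ) *
          (SNormLESNormFDerivOfEqConst F μ 2 * eLpNorm (fderiv ℝ u) 2 μ) ^ (3 / 4 : ℝ) := by
        norm_num only
        gcongr
    _ = _ := by rw [ENNReal.mul_rpow_of_nonneg _ _ (by norm_num)]; ring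

/-- Ladyzhenskaya interpolation inequality in ℝ³:
`‖f‖_{L⁴} ≤ C ‖f‖_{L²}^{1/4} ‖∇f‖_{L²}^{3/4}` for smooth compactly supported
functions. -/
theorem L4_interpolation_R3 :
    ∃ C : ℝ, 0 < C ∧
      ∀ f : EuclideanSpace ℝ (Fin 3) → ℝ, ContDiff ℝ 1 f → HasCompactSupport f →
        (eLpNorm f 4 volume).toReal ≤
          C * (eLpNorm f 2 volume).toReal ^ ((1 : ℝ) / 4) *
            (eLpNorm (fun x => ‖fderiv ℝ f x‖) 2 volume).toReal ^ ((3 : ℝ) / 4) := by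
  set C₀ := SNormLESNormFDerivOfEqConst ℝ (volume : Measure (EuclideanSpace ℝ (Fin 3))) 2
  refine ⟨(C₀ : ℝ) ^ (3 / 4 : ℝ) + 1, by positivity, fun f hf h2f ↦ ?_⟩
  have hf_L2 : eLpNorm f 2 volume ≠ ⊤ :=
    (hf.continuous.memLp_of_hasCompactSupport h2f).eLpNorm_ne_top
  have hf'_L2 : eLpNorm (fderiv ℝ f) 2 volume ≠ ⊤ :=
    ((hf.continuous_fderiv one_ne_zero).memLp_of_hasCompactSupport (h2f.fderiv ℝ)).eLpNorm_ne_top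
  have ladyzhenskaya := ENNReal.toReal_mono (by finiteness)
    (eLpNorm_four_le_of_finrank_eq_three volume (by simp) hf h2f)
  rw [eLpNorm_norm]
  simp only [ENNReal.toReal_mul, ← ENNReal.toReal_rpow, ENNReal.coe_toReal] at ladyzhenskaya
  refine ladyzhenskaya.trans ?_
  gcongr
  linarith
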